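/- If A is a ∀⁺ type of System F and t ∈ |A|, then t is normalizable and β-equivalent to a closed λ-term. -/

import Mathlib

/-! Untyped λ-calculus (de Bruijn) and System F realizability semantics. -/

/-- Untyped λ-terms in de Bruijn notation. -/
inductive Lam : Type
  | var : ℕ → Lam
  | app : Lam → Lam → Lam
  | lam : Lam → Lam
deriving DecidableEq

namespace Lam

/-- Shift the free variables ≥ `d` up by one. -/
def lift (d : ℕ) : Lam → Lam
  | var n => if n < d then var n else var (n + 1)
  | app t u => app (lift d t) (lift d u)
  | lam t => lam (lift (d + 1) t)

/-- Capture-avoiding substitution of `u` for the variable `k` (de Bruijn). -/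
def subst : Lam → ℕ → Lam → Lam
  | var n, k, u => if n = k then u else if k < n then var (n - 1) else var n
  | app t s, k, u => app (subst t k u) (subst s k u)
  | lam t, k, u => lam (subst t (k + 1) (lift 0 u))

/-- Free variables of a term. -/
def fv : Lam → Finset ℕ
  | var n => {n}
  | app t u => fv t ∪ fv u
  | lam t => ((fv t).erase 0).image (· - 1)

/-- One-step β-reduction. -/
inductive Beta : Lam → Lam → Prop
  | beta (t u : Lam) : Beta (app (lam t) u) (subst t 0 u)
  | appL {t t' : Lam} (u : Lam) : Beta t t' → Beta (app t u) (app t' u)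
  | appR (t : Lam) {u u' : Lam} : Beta u u' → Beta (app t u) (app t u')
  | lam {t t' : Lam} : Beta t t' → Beta (lam t) (lam t')

/-- Many-step β-reduction. -/
def BetaStar : Lam → Lam → Prop := Relation.ReflTransGen Beta

/-- β-equivalence. -/
def BetaEq : Lam → Lam → Prop := Relation.EqvGen Beta

/-- One-step η-reduction. -/
inductive Eta : Lam → Lam → Prop
  | eta (t : Lam) : Eta (lam (app (lift 0 t) (var 0))) t
  | appL {t t' : Lam} (u : Lam) : Eta t t' → Eta (app t u) (app t' u)
  | appR (t : Lam) {u u' : Lam} : Eta u u' → Eta (app t u) (app t u')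
  | lam {t t' : Lam} : Eta t t' → Eta (lam t) (lam t')

/-- βη-equivalence. -/
def BetaEtaEq : Lam → Lam → Prop := Relation.EqvGen (fun t u => Beta t u ∨ Eta t u)

/-- One-step weak head reduction: contracts the weak head redex `(λ t) u`
possibly applied to further arguments. -/
inductive Whr : Lam → Lam → Prop
  | head (t u : Lam) : Whr (app (lam t) u) (subst t 0 u)
  | appL {t t' : Lam} (u : Lam) : Whr t t' → Whr (app t u) (app t' u)

/-- Many-step weak head reduction (`≻_f`). -/
def WhrStar : Lam → Lam → Prop := Relation.ReflTransGen Whr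

/-- A term is normal when it has no β-redex. -/
def Normal (t : Lam) : Prop := ∀ u, ¬ Beta t u

def Normalizable (t : Lam) : Prop := ∃ u, BetaStar t u ∧ Normal u

/-- `(t)v₁…vₘ`. -/
def appList (t : Lam) (l : List Lam) : Lam := l.foldl app t

end Lam

/-- A set of λ-terms is saturated when it is closed under weak-head-expansion. -/
def Saturated (G : Set Lam) : Prop := ∀ t u : Lam, Lam.WhrStar t u → u ∈ G → t ∈ G

/-- A set of λ-terms is β-saturated when it is closed under β-expansion. -/
def BetaSaturated (G : Set Lam) : Prop := ∀ t u : Lam, Lam.BetaStar t u → u ∈ G → t ∈ G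

/-- `G → G' = {u : ∀ t ∈ G, (u)t ∈ G'}`. -/
def arrowSet (G G' : Set Lam) : Set Lam := {u | ∀ t ∈ G, Lam.app u t ∈ G'}

/-- Types of System F (de Bruijn type variables). -/
inductive Ty : Type
  | var : ℕ → Ty
  | arr : Ty → Ty → Ty
  | all : Ty → Ty
deriving DecidableEq

namespace Ty

/-- Shift the free type variables ≥ `d` up by one. -/
def lift (d : ℕ) : Ty → Ty
  | var n => if n < d then var n else var (n + 1)
  | arr A B => arr (lift d A) (lift d B)
  | all A => all (lift (d + 1) A)

/-- Capture-avoiding substitution of the type `C` for the type variable `k`. -/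
def subst : Ty → ℕ → Ty → Ty
  | var n, k, C => if n = k then C else if k < n then var (n - 1) else var n
  | arr A B, k, C => arr (subst A k C) (subst B k C)
  | all A, k, C => all (subst A (k + 1) (lift 0 C))

/-- Free type variables. -/
def fv : Ty → Finset ℕ
  | var n => {n}
  | arr A B => fv A ∪ fv B
  | all A => ((fv A).erase 0).image (· - 1)

end Ty

mutual
  /-- ∀⁺ types: types with positive quantifiers. -/
  inductive PosTy : Ty → Prop
    | var (n : ℕ) : PosTy (Ty.var n)
    | arr {B A : Ty} : NegTy B → PosTy A → PosTy (Ty.arr B A)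
    | all {A : Ty} : PosTy A → 0 ∈ A.fv → PosTy (Ty.all A)
  /-- ∀⁻ types: types with negative quantifiers. -/
  inductive NegTy : Ty → Prop
    | var (n : ℕ) : NegTy (Ty.var n)
    | arr {B A : Ty} : PosTy B → NegTy A → NegTy (Ty.arr B A)
end

/-- Typing contexts: a partial assignment of types to (de Bruijn) term variables. -/
def Ctx : Type := ℕ → Option Ty

def Ctx.empty : Ctx := fun _ => none

def Ctx.cons (B : Ty) (Γ : Ctx) : Ctx := fun n =>
  match n with
  | 0 => some B
  | n + 1 => Γ n

/-- Shift all type variables of a context (used for ∀-introduction: the fresh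
type variable `0` does not occur in the shifted context). -/
def Ctx.liftTy (Γ : Ctx) : Ctx := fun n => (Γ n).map (Ty.lift 0)

/-- Curry-style typing of System F. -/
inductive TyJ : Ctx → Lam → Ty → Prop
  | var {Γ : Ctx} {x : ℕ} {A : Ty} : Γ x = some A → TyJ Γ (Lam.var x) A
  | lam {Γ : Ctx} {B C : Ty} {t : Lam} :
      TyJ (Ctx.cons B Γ) t C → TyJ Γ (Lam.lam t) (Ty.arr B C)
  | app {Γ : Ctx} {B C : Ty} {u v : Lam} :
      TyJ Γ u (Ty.arr B C) → TyJ Γ v B → TyJ Γ (Lam.app u v) C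
  | allI {Γ : Ctx} {A : Ty} {t : Lam} :
      TyJ (Ctx.liftTy Γ) t A → TyJ Γ t (Ty.all A)
  | allE {Γ : Ctx} {A : Ty} {t : Lam} (C : Ty) :
      TyJ Γ t (Ty.all A) → TyJ Γ t (Ty.subst A 0 C)

/-- System F0 : System F where ∀-elimination only instantiates by type variables. -/
inductive TyJ0 : Ctx → Lam → Ty → Prop
  | var {Γ : Ctx} {x : ℕ} {A : Ty} : Γ x = some A → TyJ0 Γ (Lam.var x) A
  | lam {Γ : Ctx} {B C : Ty} {t : Lam} :
      TyJ0 (Ctx.cons B Γ) t C → TyJ0 Γ (Lam.lam t) (Ty.arr B C)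
  | app {Γ : Ctx} {B C : Ty} {u v : Lam} :
      TyJ0 Γ u (Ty.arr B C) → TyJ0 Γ v B → TyJ0 Γ (Lam.app u v) C
  | allI {Γ : Ctx} {A : Ty} {t : Lam} :
      TyJ0 (Ctx.liftTy Γ) t A → TyJ0 Γ t (Ty.all A)
  | allE {Γ : Ctx} {A : Ty} {t : Lam} (Y : ℕ) :
      TyJ0 Γ t (Ty.all A) → TyJ0 Γ t (Ty.subst A 0 (Ty.var Y))

/-- Interpretations: assignments of sets of λ-terms to type variables. -/
def Interp : Type := ℕ → Set Lam

def Interp.cons (G : Set Lam) (I : Interp) : Interp := fun n =>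
  match n with
  | 0 => G
  | n + 1 => I n

/-- Interpretation of types, parameterized by the admissibility class `C` of
sets used to interpret type variables (e.g. `Saturated`). -/
def interpC (C : Set Lam → Prop) : Ty → Interp → Set Lam
  | Ty.var n, I => I n
  | Ty.arr A B, I => arrowSet (interpC C A I) (interpC C B I)
  | Ty.all A, I => ⋂ (G : Set Lam) (_ : C G), interpC C A (Interp.cons G I)

/-- Girard–Krivine interpretation `|A|_I` with saturated sets. -/
def interp : Ty → Interp → Set Lam := interpC Saturated

/-- `|A|`, the intersection of `|A|_I` over all admissible interpretations. -/
def SemC (C : Set Lam → Prop) (A : Ty) : Set Lam :=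
  {t | ∀ I : Interp, (∀ n, C (I n)) → t ∈ interpC C A I}

/-- `|A| = ⋂_I |A|_I` over interpretations into saturated sets. -/
def Sem (A : Ty) : Set Lam := SemC Saturated A

/-!
Fix a variable `y` not free in `t` and let `G` be the set of terms with a β-normal form that has no
free variable in `fv t`. Then `G` is saturated, contains `y v₁ … vₙ` whenever every `vᵢ ∈ G`, and
contains `t` as soon as it contains `t y`: a reduction of `t y` either stays inside `t` or fires the
head redex `(λ s) y`, whose contractum is a renaming of `s`, and renamings reflect β-reduction.
Interpreting every type variable by `G`, induction on types shows that each ∀⁺ type is interpreted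
inside `G` and each ∀⁻ type contains the terms `y v₁ … vₙ`. Hence `t ∈ G`; as β-reduction creates no
free variables, the normal form of `t` is closed.
-/

namespace Lam

def up (f : ℕ → ℕ) : ℕ → ℕ
  | 0 => 0
  | n + 1 => f n + 1

def ren (f : ℕ → ℕ) : Lam → Lam
  | var n => var (f n)
  | app t u => app (ren f t) (ren f u)
  | lam t => lam (ren (up f) t)

lemma ren_ren (t : Lam) : ∀ f g, ren f (ren g t) = ren (f ∘ g) t := by
  induction t with
  | var n => intro f g; rfl
  | app t u iht ihu => intro f g; simp [ren, iht, ihu]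
  | lam t ih =>
      intro f g
      simp only [ren, ih]
      congr 2
      funext n; cases n <;> rfl

def liftRen (d : ℕ) (n : ℕ) : ℕ := if n < d then n else n + 1

lemma up_liftRen (d : ℕ) : up (liftRen d) = liftRen (d + 1) := by
  funext n; cases n <;> simp only [up, liftRen] <;> split_ifs <;> omega

lemma lift_eq_ren (t : Lam) : ∀ d, lift d t = ren (liftRen d) t := by
  induction t with
  | var n => intro d; simp only [lift, ren, liftRen]; split <;> rfl
  | app t u iht ihu => intro d; simp [lift, ren, iht, ihu]
  | lam t ih => intro d; simp [lift, ren, ih, up_liftRen]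

lemma ren_up_lift_zero (g : ℕ → ℕ) (u : Lam) : ren (up g) (lift 0 u) = lift 0 (ren g u) := by
  rw [lift_eq_ren, lift_eq_ren, ren_ren, ren_ren]
  rfl

def substVarRen (k y : ℕ) (n : ℕ) : ℕ := if n = k then y else if n < k then n else n - 1

lemma up_substVarRen (k y : ℕ) : up (substVarRen k y) = substVarRen (k + 1) (y + 1) := by
  funext n; cases n <;> simp only [up, substVarRen] <;> split_ifs <;> omega

lemma subst_var_eq_ren (t : Lam) : ∀ k y, subst t k (var y) = ren (substVarRen k y) t := by
  induction t with
  | var n =>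
      intro k y
      simp only [subst, ren, substVarRen]
      split_ifs <;> first | rfl | omega
  | app t u iht ihu => intro k y; simp [subst, ren, iht, ihu]
  | lam t ih => intro k y; simp [subst, ren, lift, ih, up_substVarRen]

def upN : ℕ → (ℕ → ℕ) → ℕ → ℕ
  | 0, f => f
  | k + 1, f => up (upN k f)

lemma upN_of_lt (f : ℕ → ℕ) : ∀ {k m}, m < k → upN k f m = m
  | _ + 1, 0, _ => rfl
  | _ + 1, _ + 1, h => by simp only [upN, up, upN_of_lt f (Nat.lt_of_succ_lt_succ h)]

lemma upN_of_le (f : ℕ → ℕ) : ∀ {k m}, k ≤ m → upN k f m = f (m - k) + k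
  | 0, _, _ => rfl
  | _ + 1, _ + 1, h => by
      simp only [upN, up, upN_of_le f (Nat.le_of_succ_le_succ h), Nat.add_sub_add_right]
      omega

lemma ren_subst (t : Lam) : ∀ k f u,
    ren (upN k f) (subst t k u) = subst (ren (upN (k + 1) f) t) k (ren (upN k f) u) := by
  induction t with
  | var n =>
      intro k f u
      rcases lt_trichotomy n k with h | rfl | h
      · simp [subst, ren, upN_of_lt f h, upN_of_lt f (h.trans k.lt_succ_self), h.ne, h.not_gt]
      · simp [subst, ren, upN_of_lt f n.lt_succ_self]
      · have e₁ : upN k f (n - 1) = f (n - 1 - k) + k := upN_of_le f (by omega)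
        have e₂ : upN (k + 1) f n = f (n - 1 - k) + k + 1 := by
          rw [upN_of_le f h, Nat.sub_sub, Nat.add_comm 1 k, Nat.add_assoc]
        simp only [subst, ren, if_neg h.ne', if_pos h, e₁, e₂]
        rw [if_neg (by omega), if_pos (by omega), Nat.add_sub_cancel]
  | app t u iht ihu => intro k f u; simp [subst, ren, iht, ihu]
  | lam t ih =>
      intro k f u
      simp only [subst, ren]
      rw [show up (upN k f) = upN (k + 1) f from rfl, ih]
      exact congrArg _ (congrArg _ (ren_up_lift_zero _ u))

lemma ren_subst_zero (f : ℕ → ℕ) (t u : Lam) :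
    ren f (subst t 0 u) = subst (ren (up f) t) 0 (ren f u) :=
  ren_subst t 0 f u

lemma Beta.ren {a b : Lam} (h : Beta a b) : ∀ f, Beta (a.ren f) (b.ren f) := by
  induction h with
  | beta t u => intro f; rw [ren_subst_zero]; exact Beta.beta _ _
  | appL u _ ih => intro f; exact Beta.appL _ (ih f)
  | appR t _ ih => intro f; exact Beta.appR _ (ih f)
  | lam _ ih => intro f; exact Beta.lam (ih (up f))

lemma exists_beta_of_beta_ren (s : Lam) :
    ∀ f c, Beta (s.ren f) c → ∃ s', Beta s s' ∧ c = s'.ren f := by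
  induction s with
  | var n => intro f c h; cases h
  | app s₁ s₂ ih₁ ih₂ =>
      intro f c h
      rw [ren] at h
      generalize hq : s₁.ren f = q at h
      cases h with
      | beta t u =>
          cases s₁ with
          | var n => cases hq
          | app a b => cases hq
          | lam s₀ =>
              cases hq
              exact ⟨subst s₀ 0 s₂, Beta.beta _ _, (ren_subst_zero _ _ _).symm⟩
      | appL u hb =>
          subst hq
          obtain ⟨s₁', hb', rfl⟩ := ih₁ f _ hb
          exact ⟨app s₁' s₂, Beta.appL _ hb', rfl⟩
      | appR t hb =>
          subst hq
          obtain ⟨s₂', hb', rfl⟩ := ih₂ f _ hb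
          exact ⟨app s₁ s₂', Beta.appR _ hb', rfl⟩
  | lam s₀ ih =>
      intro f c h
      rw [ren] at h
      cases h with
      | lam hb =>
          obtain ⟨s₀', hb', rfl⟩ := ih (up f) _ hb
          exact ⟨lam s₀', Beta.lam hb', rfl⟩

lemma exists_betaStar_of_betaStar_ren {f : ℕ → ℕ} {s u : Lam} (h : BetaStar (s.ren f) u) :
    ∃ s', BetaStar s s' ∧ u = s'.ren f := by
  induction h with
  | refl => exact ⟨s, .refl, rfl⟩
  | tail _ hb ih =>
      obtain ⟨s', hs', rfl⟩ := ih
      obtain ⟨s'', hb', rfl⟩ := exists_beta_of_beta_ren s' _ _ hb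
      exact ⟨s'', hs'.tail hb', rfl⟩

lemma betaStar_lam {s s' : Lam} (h : BetaStar s s') : BetaStar (lam s) (lam s') :=
  Relation.ReflTransGen.lift lam (fun _ _ => Beta.lam) _ _ h

lemma betaStar_app {t t' u u' : Lam} (ht : BetaStar t t') (hu : BetaStar u u') :
    BetaStar (app t u) (app t' u') :=
  (Relation.ReflTransGen.lift (app · u) (fun _ _ => Beta.appL u) _ _ ht).trans
    (Relation.ReflTransGen.lift (app t') (fun _ _ => Beta.appR t') _ _ hu)

lemma Whr.beta {t u : Lam} (h : Whr t u) : Beta t u := by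
  induction h with
  | head t u => exact Beta.beta t u
  | appL u _ ih => exact Beta.appL _ ih

lemma WhrStar.betaStar {t u : Lam} (h : WhrStar t u) : BetaStar t u :=
  Relation.ReflTransGen.mono (fun _ _ => Whr.beta) _ _ h

lemma fv_ren (f : ℕ → ℕ) (t : Lam) : (t.ren f).fv = t.fv.image f := by
  induction t generalizing f with
  | var n => simp [ren, fv]
  | app t u iht ihu => simp [ren, fv, iht, ihu, Finset.image_union]
  | lam t ih =>
      ext m
      simp only [ren, fv, ih, Finset.mem_image, Finset.mem_erase]
      constructor
      · rintro ⟨_, ⟨hne, j, hj, rfl⟩, rfl⟩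
        cases j with
        | zero => exact absurd rfl hne
        | succ j => exact ⟨j, ⟨j + 1, ⟨j.succ_ne_zero, hj⟩, rfl⟩, rfl⟩
      · rintro ⟨_, ⟨j, ⟨hne, hj⟩, rfl⟩, rfl⟩
        obtain ⟨j, rfl⟩ := Nat.exists_eq_succ_of_ne_zero hne
        exact ⟨f j + 1, ⟨(f j).succ_ne_zero, j + 1, hj, rfl⟩, rfl⟩

lemma mem_fv_lift_zero {m : ℕ} {u : Lam} (h : m ∈ (lift 0 u).fv) : m ≠ 0 ∧ m - 1 ∈ u.fv := by
  rw [lift_eq_ren, fv_ren, Finset.mem_image] at h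
  obtain ⟨j, hj, rfl⟩ := h
  simpa [liftRen] using hj

lemma mem_fv_subst (t : Lam) : ∀ {k u m}, m ∈ (subst t k u).fv →
    m ∈ u.fv ∨ (m < k ∧ m ∈ t.fv) ∨ (k ≤ m ∧ m + 1 ∈ t.fv) := by
  induction t with
  | var n =>
      intro k u m hm
      simp only [subst] at hm
      split_ifs at hm
      · exact Or.inl hm
      all_goals simp only [fv, Finset.mem_singleton] at hm ⊢; omega
  | app t s iht ihs =>
      intro k u m hm
      simp only [subst, fv, Finset.mem_union] at hm ⊢
      rcases hm with h | h
      · rcases iht h with h | h | h <;> tauto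
      · rcases ihs h with h | h | h <;> tauto
  | lam t ih =>
      intro k u m hm
      simp only [subst, fv, Finset.mem_image, Finset.mem_erase] at hm ⊢
      obtain ⟨j, ⟨hj0, hj⟩, rfl⟩ := hm
      rcases ih hj with h | ⟨h1, h2⟩ | ⟨h1, h2⟩
      · exact Or.inl (mem_fv_lift_zero h).2
      · exact Or.inr (Or.inl ⟨by omega, j, ⟨hj0, h2⟩, rfl⟩)
      · exact Or.inr (Or.inr ⟨by omega, j + 1, ⟨by omega, h2⟩, by omega⟩)

lemma fv_subset_of_beta {a b : Lam} (h : Beta a b) : b.fv ⊆ a.fv := by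
  induction h with
  | beta t u =>
      intro m hm
      simp only [fv, Finset.mem_union, Finset.mem_image, Finset.mem_erase]
      rcases mem_fv_subst t hm with h | ⟨h, _⟩ | ⟨_, h⟩
      · exact Or.inr h
      · omega
      · exact Or.inl ⟨m + 1, ⟨m.succ_ne_zero, h⟩, rfl⟩
  | appL u _ ih => exact Finset.union_subset_union ih subset_rfl
  | appR t _ ih => exact Finset.union_subset_union subset_rfl ih
  | lam _ ih => exact Finset.image_subset_image (Finset.erase_subset_erase 0 ih)

lemma fv_subset_of_betaStar {a b : Lam} (h : BetaStar a b) : b.fv ⊆ a.fv := by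
  induction h with
  | refl => exact subset_rfl
  | tail _ hb ih => exact (fv_subset_of_beta hb).trans ih

lemma Normal.of_ren {f : ℕ → ℕ} {s : Lam} (h : Normal (s.ren f)) : Normal s :=
  fun _ hu => h _ (hu.ren f)

lemma Normal.lam {s : Lam} (h : Normal s) : Normal (lam s) := by
  rintro _ (_ | _ | _ | hb)
  exact h _ hb

lemma Normal.of_app_left {t u : Lam} (h : Normal (app t u)) : Normal t :=
  fun _ ht => h _ (Beta.appL _ ht)

lemma Normal.app {t u : Lam} (ht : Normal t) (hlam : ∀ s, t ≠ Lam.lam s) (hu : Normal u) :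
    Normal (app t u) := by
  intro _ h
  cases h with
  | beta s _ => exact hlam s rfl
  | appL _ hb => exact ht _ hb
  | appR _ hb => exact hu _ hb

lemma exists_normal_of_betaStar_app_var {t c : Lam} {y : ℕ} (h : BetaStar (app t (var y)) c)
    (hc : Normal c) : ∃ t', BetaStar t t' ∧ Normal t' ∧ t'.fv ⊆ c.fv := by
  generalize ha : app t (var y) = a at h
  induction h using Relation.ReflTransGen.head_induction_on generalizing t with
  | refl =>
      subst ha
      exact ⟨t, .refl, hc.of_app_left, Finset.subset_union_left⟩
  | head hstep htail ih =>
      subst ha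
      cases hstep with
      | beta s _ =>
          rw [subst_var_eq_ren] at htail
          obtain ⟨s', hs', rfl⟩ := exists_betaStar_of_betaStar_ren htail
          refine ⟨lam s', betaStar_lam hs', hc.of_ren.lam, ?_⟩
          simp only [fv, fv_ren, Finset.image_subset_iff, Finset.mem_erase, and_imp]
          intro j hj0 hj
          exact Finset.mem_image.2 ⟨j, hj, by simp [substVarRen, hj0]⟩
      | appL _ hb =>
          obtain ⟨t', ht', hnt', hfv⟩ := ih rfl
          exact ⟨t', .head hb ht', hnt', hfv⟩
      | appR _ hb => cases hb

def normalizableAvoiding (F : Finset ℕ) : Set Lam :=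
  {t | ∃ t', BetaStar t t' ∧ Normal t' ∧ Disjoint t'.fv F}

lemma saturated_normalizableAvoiding (F : Finset ℕ) : Saturated (normalizableAvoiding F) := by
  rintro t u htu ⟨u', hu', hnu', hF⟩
  exact ⟨u', htu.betaStar.trans hu', hnu', hF⟩

lemma mem_normalizableAvoiding_of_app_var {F : Finset ℕ} {t : Lam} {y : ℕ}
    (h : app t (var y) ∈ normalizableAvoiding F) : t ∈ normalizableAvoiding F := by
  obtain ⟨c, hc, hnc, hF⟩ := h
  obtain ⟨t', ht', hnt', hfv⟩ := exists_normal_of_betaStar_app_var hc hnc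
  exact ⟨t', ht', hnt', hF.mono_left hfv⟩

lemma exists_betaStar_appList_var {F : Finset ℕ} {y : ℕ} (hy : y ∉ F) {l : List Lam}
    (hl : ∀ a ∈ l, a ∈ normalizableAvoiding F) :
    ∃ r, BetaStar (appList (var y) l) r ∧ Normal r ∧ Disjoint r.fv F ∧ ∀ s, r ≠ Lam.lam s := by
  induction l using List.reverseRecOn with
  | nil =>
      refine ⟨var y, .refl, (fun _ h => nomatch h), ?_, fun _ h => nomatch h⟩
      simpa [fv] using hy
  | append_singleton l a ih =>
      obtain ⟨r, hr, hnr, hrF, hrlam⟩ := ih fun b hb => hl b (List.mem_append_left _ hb)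
      obtain ⟨a', ha', hna', haF⟩ := hl a (List.mem_append_right _ (List.mem_singleton_self a))
      refine ⟨app r a', ?_, hnr.app hrlam hna', ?_, fun _ h => nomatch h⟩
      · simpa [appList] using betaStar_app hr ha'
      · simpa [fv] using And.intro hrF haF

lemma appList_var_mem_normalizableAvoiding {F : Finset ℕ} {y : ℕ} (hy : y ∉ F) {l : List Lam}
    (hl : ∀ a ∈ l, a ∈ normalizableAvoiding F) : appList (var y) l ∈ normalizableAvoiding F :=
  let ⟨r, hr, hnr, hrF, _⟩ := exists_betaStar_appList_var hy hl
  ⟨r, hr, hnr, hrF⟩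

end Lam

lemma interpC_const_posTy_negTy {C : Set Lam → Prop} {G : Set Lam} (hG : C G) {h : Lam}
    (happList : ∀ l : List Lam, (∀ a ∈ l, a ∈ G) → h.appList l ∈ G)
    (hext : ∀ t : Lam, Lam.app t h ∈ G → t ∈ G) (A : Ty) :
    (PosTy A → interpC C A (fun _ => G) ⊆ G) ∧
      (NegTy A → ∀ l : List Lam, (∀ a ∈ l, a ∈ G) → h.appList l ∈ interpC C A (fun _ => G)) := by
  induction A with
  | var n => exact ⟨fun _ _ ht => ht, fun _ => happList⟩
  | arr B P ihB ihP =>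
      constructor
      · rintro (_ | ⟨hB, hP⟩ | _) t ht
        exact hext t (ihP.1 hP (ht h (ihB.2 hB [] (fun _ h => nomatch h))))
      · rintro (_ | ⟨hB, hP⟩) l hl s hs
        have := ihP.2 hP (l ++ [s]) fun a ha => by
          rcases List.mem_append.1 ha with ha | ha
          · exact hl a ha
          · exact (List.mem_singleton.1 ha) ▸ ihB.1 hB hs
        simpa [Lam.appList] using this
  | all A ihA =>
      constructor
      · rintro (_ | _ | ⟨hA, _⟩) t ht
        have ht' : t ∈ interpC C A (Interp.cons G fun _ => G) := Set.mem_iInter₂.1 ht G hG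
        have hcons : Interp.cons G (fun _ => G) = fun _ => G := by funext n; cases n <;> rfl
        exact ihA.1 hA (hcons ▸ ht')
      · rintro ⟨⟩

/-- Corollary 1(i): if `A` is ∀⁺ and `t ∈ |A|`, then `t` is
normalizable and β-equivalent to a closed term. -/
theorem normalizable_and_closed (A : Ty) (hA : PosTy A) (t : Lam) (ht : t ∈ Sem A) :
    t.Normalizable ∧ ∃ t', Lam.BetaEq t t' ∧ t'.fv = ∅ := by
  obtain ⟨y, hy⟩ := Infinite.exists_notMem_finset t.fv
  set G := Lam.normalizableAvoiding t.fv
  have hGsat : Saturated G := Lam.saturated_normalizableAvoiding t.fv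
  have htG : t ∈ G :=
    (interpC_const_posTy_negTy hGsat (fun _ => Lam.appList_var_mem_normalizableAvoiding hy)
      (fun _ => Lam.mem_normalizableAvoiding_of_app_var) A).1 hA (ht _ fun _ => hGsat)
  obtain ⟨t', htt', hnt', hF⟩ := htG
  refine ⟨⟨t', htt', hnt'⟩, t', Relation.EqvGen.reflTransGen_le_eqvGen (r := Lam.Beta) _ _ htt', ?_⟩
  exact Finset.disjoint_self_iff_empty _ |>.1 (hF.mono_right (Lam.fv_subset_of_betaStar htt'))
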